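/- arXiv:1909.08849 — 4 statements merged into one kernel-verified Lean document; each statement's English description precedes it below -/
import Mathlib

section
/- For every m ≥ 1 and all integers k_1, ..., k_m ∈ ℤ, there exist nonnegative integers n and t such that for every ℓ with 1 ≤ ℓ ≤ m one has k_ℓ = s_2(n + ℓ·t) − s_2(n) (the difference taken in ℤ). -/
/-- The binary sum-of-digits function. -/
def s2 (n : ℕ) : ℕ := (Nat.digits 2 n).sum

lemma s2_rec (n : ℕ) : s2 n = n % 2 + s2 (n / 2) := by
  rcases Nat.eq_zero_or_pos n with h | h
  · simp [h, s2]
  · rw [s2, Nat.digits_def' (by norm_num) h]; simp [s2]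

@[simp] lemma s2_zero : s2 0 = 0 := by simp [s2]
@[simp] lemma s2_one : s2 1 = 1 := by simp [s2]

/-- no-carry addition of a low part `x < 2^B` and a shifted part. -/
lemma s2_add_mul_pow (B : ℕ) : ∀ x y : ℕ, x < 2 ^ B →
    s2 (x + y * 2 ^ B) = s2 x + s2 y := by
  induction B with
  | zero =>
    intro x y hx
    interval_cases x
    simp
  | succ B ih =>
    intro x y hx
    have hsp : y * 2 ^ (B+1) = (y * 2 ^ B) * 2 := by ring
    have h2 : (2:ℕ) ^ (B+1) = 2 ^ B * 2 := by ring
    rcases Nat.eq_zero_or_pos y with hy | hy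
    · subst hy; simp
    · have hpos : 0 < x + y * 2 ^ (B+1) := by
        have : 0 < 2 ^ (B+1) := by positivity
        nlinarith
      rw [s2_rec (x + y * 2 ^ (B+1))]
      have e1 : (x + y * 2 ^ (B+1)) % 2 = x % 2 := by omega
      have e2 : (x + y * 2 ^ (B+1)) / 2 = x / 2 + y * 2 ^ B := by omega
      rw [e1, e2, ih (x/2) y (by omega), s2_rec x]
      ring

/-- complementary digit sums inside a block of ones -/
lemma s2_compl (r : ℕ) : ∀ x y : ℕ, x + y = 2 ^ r - 1 → s2 x + s2 y = r := by
  induction r with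
  | zero => intro x y h; simp at h; simp [h.1, h.2]
  | succ r ih =>
    intro x y h
    have h2 : (2:ℕ) ^ (r+1) = 2 ^ r * 2 := by ring
    have hp : 0 < (2:ℕ) ^ r := by positivity
    have hx2 : x / 2 + y / 2 = 2 ^ r - 1 := by omega
    have := ih (x/2) (y/2) hx2
    have hm : x % 2 + y % 2 = 1 := by omega
    rw [s2_rec x, s2_rec y]
    omega

lemma s2_pow_sub_one (r : ℕ) : s2 (2 ^ r - 1) = r := by
  have := s2_compl r 0 (2 ^ r - 1) (by omega)
  simpa using this

lemma s2_pow_add (A x : ℕ) (h : x < 2 ^ A) : s2 (2 ^ A + x) = 1 + s2 x := by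
  have := s2_add_mul_pow A x 1 h
  simp at this
  rw [Nat.add_comm, this]
  omega

/-- digit sum of small multiples of 2^r - 1 -/
lemma s2_mul_plateau (r q : ℕ) (hq : q < 2 ^ r) :
    s2 ((q + 1) * (2 ^ r - 1)) = r := by
  have hp : 0 < (2:ℕ) ^ r := by positivity
  obtain ⟨u, hu⟩ : ∃ u, 2 ^ r = q + u + 1 := ⟨2 ^ r - q - 1, by omega⟩
  have key : (q + 1) * (2 ^ r - 1) = u + q * 2 ^ r := by
    have e1 : 2 ^ r - 1 = q + u := by omega
    rw [e1, hu]; ring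
  rw [key, s2_add_mul_pow r u q (by omega)]
  have := s2_compl r q u (by omega)
  omega

/-- spike: s2 ((2^r + 1)(2^r - 1)) = 2r -/
lemma s2_mul_spike (r : ℕ) :
    s2 ((2 ^ r + 1) * (2 ^ r - 1)) = 2 * r := by
  have hp : 0 < (2:ℕ) ^ r := by positivity
  have key : (2 ^ r + 1) * (2 ^ r - 1) = (2 ^ r - 1) + (2 ^ r - 1) * 2 ^ r := by
    obtain ⟨u, hu⟩ : ∃ u, 2 ^ r = u + 1 := ⟨2 ^ r - 1, by omega⟩
    have e1 : 2 ^ r - 1 = u := by omega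
    rw [e1, hu]; ring
  rw [key, s2_add_mul_pow r _ _ (by omega), s2_pow_sub_one]
  ring

/-- junk after the spike -/
lemma s2_mul_junk (r x : ℕ) (hx : 1 ≤ x) (hxr : x + 1 < 2 ^ r) :
    s2 ((2 ^ r + 1 + x) * (2 ^ r - 1)) + s2 x = r + 1 + s2 (x - 1) := by
  have hp : 0 < (2:ℕ) ^ r := by positivity
  obtain ⟨u, hu⟩ : ∃ u, 2 ^ r = x + 1 + u + 1 := ⟨2 ^ r - x - 2, by omega⟩
  obtain ⟨x', hx'⟩ : ∃ x', x = x' + 1 := ⟨x - 1, by omega⟩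
  have key : (2 ^ r + 1 + x) * (2 ^ r - 1)
      = (2 ^ r - 1 - x) + ((x - 1) + 2 ^ r) * 2 ^ r := by
    have e1 : 2 ^ r - 1 = x + u + 1 := by omega
    have e2 : 2 ^ r - 1 - x = u + 1 := by omega
    have e3 : x - 1 = x' := by omega
    rw [e2, e3, e1, hu, hx']; ring
  rw [key, s2_add_mul_pow r _ _ (by omega)]
  have h1 : s2 ((x - 1) + 2 ^ r) = s2 (x - 1) + 1 := by
    simpa using s2_add_mul_pow r (x-1) 1 (by omega)
  have h2 := s2_compl r (2 ^ r - 1 - x) x (by omega)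
  omega

/-- the basic gadget block: difference pattern (0,…,0, R, bounded junk) -/
lemma gadget (R j ℓ mm : ℕ) (hj1 : 1 ≤ j) (hjm : j ≤ mm) (hl : ℓ ≤ mm)
    (hR : mm + 2 ≤ R) :
    (s2 ((2 ^ R + 1 - j) * (2 ^ R - 1) + ℓ * (2 ^ R - 1)) : ℤ)
      - (s2 ((2 ^ R + 1 - j) * (2 ^ R - 1)) : ℤ)
    = if j < ℓ then 1 + (s2 (ℓ - j - 1) : ℤ) - s2 (ℓ - j)
      else if j = ℓ then (R : ℤ) else 0 := by
  have hR2 : R < 2 ^ R := Nat.lt_two_pow_self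
  have hj2 : j < 2 ^ R := by omega
  have hbase : s2 ((2 ^ R + 1 - j) * (2 ^ R - 1)) = R := by
    have h := s2_mul_plateau R (2 ^ R - j) (by omega)
    rwa [show 2 ^ R - j + 1 = 2 ^ R + 1 - j from by omega] at h
  have hcomb : (2 ^ R + 1 - j) * (2 ^ R - 1) + ℓ * (2 ^ R - 1)
      = (2 ^ R + 1 - j + ℓ) * (2 ^ R - 1) := (add_mul _ _ _).symm
  rcases lt_trichotomy ℓ j with h | h | h
  · have hpl := s2_mul_plateau R (2 ^ R - j + ℓ) (by omega)
    rw [hcomb, show 2 ^ R + 1 - j + ℓ = (2 ^ R - j + ℓ) + 1 from by omega, hpl,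
      hbase, if_neg (by omega), if_neg (by omega)]
    ring
  · have hsp := s2_mul_spike R
    rw [hcomb, show 2 ^ R + 1 - j + ℓ = 2 ^ R + 1 from by omega, hsp, hbase,
      if_neg (by omega), if_pos (by omega)]
    push_cast
    ring
  · have hjk := s2_mul_junk R (ℓ - j) (by omega) (by omega)
    rw [hcomb, show 2 ^ R + 1 - j + ℓ = 2 ^ R + 1 + (ℓ - j) from by omega,
      hbase, if_pos h]
    omega

/-- assemble blocks (c,d) into a single pair (n,t) with no carry interaction
for multipliers up to m -/
def build (m : ℕ) : List (ℕ × ℕ) → ℕ × ℕ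
  | [] => (0, 0)
  | (c, d) :: L =>
    ((build m L).1 * 2 ^ (d + m * c + 1) + d, (build m L).2 * 2 ^ (d + m * c + 1) + c)

lemma build_s2 (m : ℕ) (L : List (ℕ × ℕ)) (ℓ : ℕ) (hℓ : ℓ ≤ m) :
    s2 ((build m L).1 + ℓ * (build m L).2)
      = (L.map (fun p => s2 (p.2 + ℓ * p.1))).sum := by
  induction L with
  | nil => simp [build, s2]
  | cons cd L ih =>
    obtain ⟨c, d⟩ := cd
    have key : (build m ((c,d)::L)).1 + ℓ * (build m ((c,d)::L)).2
        = (d + ℓ * c) + ((build m L).1 + ℓ * (build m L).2) * 2 ^ (d + m * c + 1) := by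
      simp only [build]
      ring
    have hbound : d + ℓ * c < 2 ^ (d + m * c + 1) := by
      have h1 : d + m * c < 2 ^ (d + m * c) := Nat.lt_two_pow_self
      have h2 : (2:ℕ) ^ (d + m * c) ≤ 2 ^ (d + m * c + 1) := by
        apply Nat.pow_le_pow_right <;> omega
      have h3 : ℓ * c ≤ m * c := Nat.mul_le_mul_right c hℓ
      omega
    rw [key, s2_add_mul_pow _ _ _ hbound, ih]
    simp

theorem stmt_0 (m : ℕ) (hm : 1 ≤ m) (k : ℕ → ℤ) :
    ∃ n t : ℕ, ∀ ℓ : ℕ, 1 ≤ ℓ → ℓ ≤ m →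
      k ℓ = (s2 (n + ℓ * t) : ℤ) - (s2 n : ℤ) := by
  classical
  set S : ℕ := (Finset.Icc 1 m).sup (fun j => (k j).natAbs) with hS
  set A : ℕ := S + 2 * m + 2 with hA
  set r : ℕ → ℕ := fun j => (k j + A - j).toNat with hr
  have hrval : ∀ j, 1 ≤ j → j ≤ m → (r j : ℤ) = k j + (A : ℤ) - j ∧ m + 2 ≤ r j := by
    intro j h1 h2
    have hub : (k j).natAbs ≤ S := Finset.le_sup (f := fun j => (k j).natAbs) (Finset.mem_Icc.2 ⟨h1, h2⟩)
    constructor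
    · show ((k j + (A : ℤ) - j).toNat : ℤ) = k j + (A : ℤ) - j
      omega
    · show m + 2 ≤ (k j + (A : ℤ) - j).toNat
      omega
  set L : List (ℕ × ℕ) := (1, 2 ^ A - 1) :: List.ofFn (fun i : Fin m =>
      (2 ^ r ((i : ℕ) + 1) - 1,
        (2 ^ r ((i : ℕ) + 1) - (i : ℕ)) * (2 ^ r ((i : ℕ) + 1) - 1))) with hL
  refine ⟨(build m L).1, (build m L).2, ?_⟩
  intro ℓ hℓ1 hℓ2
  have h0 := build_s2 m L 0 (by omega)
  rw [show (build m L).1 + 0 * (build m L).2 = (build m L).1 from by ring] at h0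
  have hℓ := build_s2 m L ℓ hℓ2
  rw [hℓ, h0, hL]
  simp only [List.map_cons, List.map_ofFn, List.sum_cons, List.sum_ofFn, Function.comp]
  push_cast
  -- base block values
  have hA2 : A < 2 ^ A := Nat.lt_two_pow_self
  have hbase0 : s2 (2 ^ A - 1 + 0 * 1) = A := by
    simpa using s2_pow_sub_one A
  have hbaseℓ : s2 (2 ^ A - 1 + ℓ * 1) = 1 + s2 (ℓ - 1) := by
    rw [show 2 ^ A - 1 + ℓ * 1 = 2 ^ A + (ℓ - 1) from by omega]
    exact s2_pow_add A (ℓ - 1) (by omega)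
  rw [hbase0, hbaseℓ]
  push_cast
  -- per-block values via gadget
  have hkey : ∀ i : Fin m,
      (s2 ((2 ^ r ((i : ℕ) + 1) - (i : ℕ)) * (2 ^ r ((i : ℕ) + 1) - 1)
          + ℓ * (2 ^ r ((i : ℕ) + 1) - 1)) : ℤ)
        - (s2 ((2 ^ r ((i : ℕ) + 1) - (i : ℕ)) * (2 ^ r ((i : ℕ) + 1) - 1)
          + 0 * (2 ^ r ((i : ℕ) + 1) - 1)) : ℤ)
      = if (i : ℕ) + 1 < ℓ then 1 + (s2 (ℓ - ((i : ℕ) + 1) - 1) : ℤ) - s2 (ℓ - ((i : ℕ) + 1))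
        else if (i : ℕ) + 1 = ℓ then (r ((i : ℕ) + 1) : ℤ) else 0 := by
    intro i
    have hi := i.isLt
    have hrv := hrval ((i : ℕ) + 1) (by omega) (by omega)
    rw [show (2 ^ r ((i : ℕ) + 1) - (i : ℕ)) * (2 ^ r ((i : ℕ) + 1) - 1)
          + 0 * (2 ^ r ((i : ℕ) + 1) - 1)
        = (2 ^ r ((i : ℕ) + 1) - (i : ℕ)) * (2 ^ r ((i : ℕ) + 1) - 1) from by ring]
    rw [show (2 ^ r ((i : ℕ) + 1) - (i : ℕ)) = 2 ^ r ((i : ℕ) + 1) + 1 - ((i : ℕ) + 1) from by omega]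
    exact gadget (r ((i : ℕ) + 1)) ((i : ℕ) + 1) ℓ m (by omega) (by omega) hℓ2 hrv.2
  -- assemble the sum
  set p : ℕ := ℓ - 1 with hp
  have hℓp : ℓ = p + 1 := by omega
  have hpm : p < m := by omega
  have hsum : (∑ i : Fin m, (s2 ((2 ^ r ((i : ℕ) + 1) - (i : ℕ)) * (2 ^ r ((i : ℕ) + 1) - 1)
          + ℓ * (2 ^ r ((i : ℕ) + 1) - 1)) : ℤ))
        - (∑ i : Fin m, (s2 ((2 ^ r ((i : ℕ) + 1) - (i : ℕ)) * (2 ^ r ((i : ℕ) + 1) - 1)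
          + 0 * (2 ^ r ((i : ℕ) + 1) - 1)) : ℤ))
      = (r ℓ : ℤ) + p - s2 p := by
    rw [← Finset.sum_sub_distrib]
    rw [Finset.sum_congr rfl (fun i _ => hkey i)]
    rw [Fin.sum_univ_eq_sum_range (fun i => if i + 1 < ℓ then 1 + (s2 (ℓ - (i + 1) - 1) : ℤ) - s2 (ℓ - (i + 1))
        else if i + 1 = ℓ then (r (i + 1) : ℤ) else 0) m]
    have hs1 : ∑ i ∈ Finset.range m, (if i + 1 < ℓ then 1 + (s2 (ℓ - (i + 1) - 1) : ℤ) - s2 (ℓ - (i + 1))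
        else if i + 1 = ℓ then (r (i + 1) : ℤ) else 0)
        = ∑ i ∈ Finset.range (p + 1), (if i + 1 < ℓ then 1 + (s2 (ℓ - (i + 1) - 1) : ℤ) - s2 (ℓ - (i + 1))
        else if i + 1 = ℓ then (r (i + 1) : ℤ) else 0) := by
      symm
      apply Finset.sum_subset (Finset.range_subset_range.2 (by omega))
      intro i hi hni
      simp only [Finset.mem_range] at hi hni
      rw [if_neg (by omega), if_neg (by omega)]
    rw [hs1, Finset.sum_range_succ, if_neg (by omega), if_pos (by omega)]
    have hs3 : ∀ i ∈ Finset.range p,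
        (if i + 1 < ℓ then 1 + (s2 (ℓ - (i + 1) - 1) : ℤ) - s2 (ℓ - (i + 1))
          else if i + 1 = ℓ then (r (i + 1) : ℤ) else 0)
        = 1 + ((s2 (p - (i + 1)) : ℤ) - s2 (p - i)) := by
      intro i hi
      simp only [Finset.mem_range] at hi
      rw [if_pos (by omega), show ℓ - (i + 1) - 1 = p - (i + 1) from by omega,
        show ℓ - (i + 1) = p - i from by omega]
      ring
    rw [Finset.sum_congr rfl hs3, Finset.sum_add_distrib, Finset.sum_const,
      Finset.card_range, Finset.sum_range_sub (fun i => (s2 (p - i) : ℤ)), hℓp]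
    simp [s2_zero]
    ring
  have hcast : (ℓ : ℤ) = (p : ℤ) + 1 := by omega
  have hAcast : (A : ℤ) = (S : ℤ) + 2 * (m : ℤ) + 2 := by rw [hA]; push_cast; ring
  linarith [hsum, (hrval ℓ hℓ1 hℓ2).1, hAcast, hcast]
end

section
/- Let m ≥ 1 and k ≥ 1, and let n_0, ..., n_{k−1} and t_0, ..., t_{k−1} be nonnegative integers. Then there exist nonnegative integers n and t such that for every ℓ with 1 ≤ ℓ ≤ m, s_2(n + ℓ·t) − s_2(n + (ℓ−1)·t) = Σ_{0 ≤ j < k} ( s_2(n_j + ℓ·t_j) − s_2(n_j + (ℓ−1)·t_j) ), all differences taken in ℤ. -/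
lemma s2_block {a b B : ℕ} (ha : a < 2 ^ B) : s2 (a + 2 ^ B * b) = s2 a + s2 b := by
  rcases Nat.eq_zero_or_pos b with rfl | hb
  · simp [s2]
  · have hlen : (Nat.digits 2 a).length ≤ B := by
      rcases Nat.eq_zero_or_pos a with rfl | hapos
      · simp
      · rw [Nat.digits_len 2 a one_lt_two hapos.ne']
        have := (Nat.log_lt_iff_lt_pow one_lt_two hapos.ne').mpr ha
        omega
    have hB : (Nat.digits 2 a).length + (B - (Nat.digits 2 a).length) = B :=
      Nat.add_sub_cancel' hlen
    have := Nat.digits_append_zeroes_append_digits (b := 2)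
      (k := B - (Nat.digits 2 a).length) (m := b) (n := a) one_lt_two hb
    rw [hB] at this
    unfold s2
    rw [← this]
    simp

lemma key (m k : ℕ) (ns ts : ℕ → ℕ) :
    ∃ n t : ℕ, ∀ ℓ : ℕ, ℓ ≤ m →
      s2 (n + ℓ * t) = ∑ j ∈ Finset.range k, s2 (ns j + ℓ * ts j) := by
  induction k generalizing ns ts with
  | zero => exact ⟨0, 0, fun ℓ _ => by simp [s2]⟩
  | succ k ih =>
    obtain ⟨n', t', h'⟩ := ih (fun j => ns (j + 1)) (fun j => ts (j + 1))
    set B := ns 0 + m * ts 0 + 1 with hB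
    have hlt : ∀ ℓ ≤ m, ns 0 + ℓ * ts 0 < 2 ^ B := by
      intro ℓ hℓ
      calc ns 0 + ℓ * ts 0 ≤ ns 0 + m * ts 0 := by
            gcongr
        _ < B := Nat.lt_succ_self _
        _ < 2 ^ B := Nat.lt_two_pow_self
    refine ⟨ns 0 + 2 ^ B * n', ts 0 + 2 ^ B * t', fun ℓ hℓ => ?_⟩
    have harr : ns 0 + 2 ^ B * n' + ℓ * (ts 0 + 2 ^ B * t')
        = (ns 0 + ℓ * ts 0) + 2 ^ B * (n' + ℓ * t') := by ring
    rw [harr, s2_block (hlt ℓ hℓ), h' ℓ hℓ, Finset.sum_range_succ']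
    ring

theorem stmt_2 (m k : ℕ) (hm : 1 ≤ m) (hk : 1 ≤ k) (ns ts : ℕ → ℕ) :
    ∃ n t : ℕ, ∀ ℓ : ℕ, 1 ≤ ℓ → ℓ ≤ m →
      (s2 (n + ℓ * t) : ℤ) - (s2 (n + (ℓ - 1) * t) : ℤ) =
        ∑ j ∈ Finset.range k,
          ((s2 (ns j + ℓ * ts j) : ℤ) - (s2 (ns j + (ℓ - 1) * ts j) : ℤ)) := by
  obtain ⟨n, t, h⟩ := key m k ns ts
  refine ⟨n, t, fun ℓ h1 h2 => ?_⟩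
  rw [Finset.sum_sub_distrib]
  have e1 := h ℓ h2
  have e2 := h (ℓ - 1) (le_trans (Nat.sub_le _ _) h2)
  rw [e1, e2]
  push_cast
  ring
end

section
/- For all integers k_1, k_2 ∈ ℤ, there exist nonnegative integers n and t such that s_2(n + t) − s_2(n) = k_1 and s_2(n + 2t) − s_2(n) = k_2 (differences taken in ℤ). -/
lemma s2_len_le {a k : ℕ} (h : a < 2 ^ k) : (Nat.digits 2 a).length ≤ k := by
  rcases Nat.eq_zero_or_pos a with rfl | ha
  · simp
  · rw [Nat.digits_len 2 a (by norm_num) ha.ne']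
    have := Nat.log_lt_of_lt_pow ha.ne' h
    omega

lemma s2_add {a k : ℕ} (b : ℕ) (h : a < 2 ^ k) :
    s2 (a + 2 ^ k * b) = s2 a + s2 b := by
  rcases Nat.eq_zero_or_pos b with rfl | hb
  · simp [s2]
  · obtain ⟨j, hj⟩ := Nat.exists_eq_add_of_le (s2_len_le h)
    rw [s2, hj, ← Nat.digits_append_zeroes_append_digits (by norm_num) hb]
    simp [s2, List.sum_append]

/-- Auxiliary predicate: a pair is realizable with an explicit bound. -/
def Q (k₁ k₂ : ℤ) : Prop :=
  ∃ n t k : ℕ, n + 2 * t < 2 ^ k ∧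
    (s2 (n + t) : ℤ) - (s2 n : ℤ) = k₁ ∧
    (s2 (n + 2 * t) : ℤ) - (s2 n : ℤ) = k₂

lemma Q_combine {k₁ k₂ e₁ e₂ : ℤ} (h : Q k₁ k₂) (n₀ t₀ k₀ : ℕ)
    (hb : n₀ + 2 * t₀ < 2 ^ k₀)
    (h1 : (s2 (n₀ + t₀) : ℤ) - (s2 n₀ : ℤ) = e₁)
    (h2 : (s2 (n₀ + 2 * t₀) : ℤ) - (s2 n₀ : ℤ) = e₂) :
    Q (k₁ + e₁) (k₂ + e₂) := by
  obtain ⟨n, t, k, hk, hd1, hd2⟩ := h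
  refine ⟨n + 2 ^ k * n₀, t + 2 ^ k * t₀, k + k₀, ?_, ?_, ?_⟩
  · have : n + 2 ^ k * n₀ + 2 * (t + 2 ^ k * t₀)
        = (n + 2 * t) + 2 ^ k * (n₀ + 2 * t₀) := by ring
    rw [this, pow_add]
    calc (n + 2 * t) + 2 ^ k * (n₀ + 2 * t₀)
        < 2 ^ k + 2 ^ k * (n₀ + 2 * t₀) := by omega
      _ = 2 ^ k * (1 + (n₀ + 2 * t₀)) := by ring
      _ ≤ 2 ^ k * 2 ^ k₀ := Nat.mul_le_mul_left _ (by omega)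
  · have e : n + 2 ^ k * n₀ + (t + 2 ^ k * t₀) = (n + t) + 2 ^ k * (n₀ + t₀) := by ring
    rw [e, s2_add _ (by omega), s2_add _ (by omega)]
    push_cast
    omega
  · have e : n + 2 ^ k * n₀ + 2 * (t + 2 ^ k * t₀)
        = (n + 2 * t) + 2 ^ k * (n₀ + 2 * t₀) := by ring
    rw [e, s2_add _ (by omega), s2_add _ (by omega)]
    push_cast
    omega

lemma Q_all (k₁ k₂ : ℤ) : Q k₁ k₂ := by
  induction k₁ using Int.induction_on with
  | zero =>
    induction k₂ using Int.induction_on with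
    | zero => exact ⟨0, 0, 0, by norm_num, by simp [s2], by simp [s2]⟩
    | succ i ih =>
      simpa using Q_combine (e₁ := 0) (e₂ := 1) ih 1 1 2 (by norm_num) (by norm_num [s2]) (by norm_num [s2])
    | pred i ih =>
      simpa [sub_eq_add_neg] using Q_combine (e₁ := 0) (e₂ := -1) ih 11 3 5 (by norm_num) (by norm_num [s2]) (by norm_num [s2])
  | succ i ih =>
    simpa using Q_combine (e₁ := 1) (e₂ := 0) ih 2 1 3 (by norm_num) (by norm_num [s2]) (by norm_num [s2])
  | pred i ih =>
    simpa [sub_eq_add_neg] using Q_combine (e₁ := -1) (e₂ := 0) ih 3 1 3 (by norm_num) (by norm_num [s2]) (by norm_num [s2])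

theorem stmt_11 (k₁ k₂ : ℤ) :
    ∃ n t : ℕ, (s2 (n + t) : ℤ) - (s2 n : ℤ) = k₁ ∧
      (s2 (n + 2 * t) : ℤ) - (s2 n : ℤ) = k₂ := by
  obtain ⟨n, t, k, _, h1, h2⟩ := Q_all k₁ k₂
  exact ⟨n, t, h1, h2⟩
end

section
/- Let g(j) = s_2(j + 1) − s_2(j) (in ℤ). Let m ≥ 1 and L ≥ 0 be integers with m ≤ 2^L. Then for every ℓ with 1 ≤ ℓ ≤ m, Σ_{2·2^L − m + ℓ ≤ j < 3·2^L − m + ℓ} g(j) equals 0 if 1 ≤ ℓ < m, and equals 1 if ℓ = m. -/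
/-- The first difference of the binary sum-of-digits function. -/
def g (j : ℕ) : ℤ := (s2 (j + 1) : ℤ) - (s2 j : ℤ)

lemma s2_add_pow_mul (e q r : ℕ) (hq : 0 < q) (hr : r < 2 ^ e) :
    s2 (r + 2 ^ e * q) = s2 r + s2 q := by
  have hlen : (Nat.digits 2 r).length ≤ e := by
    rcases Nat.eq_zero_or_pos r with rfl | hr0
    · simp
    · rw [Nat.digits_len 2 r (by norm_num) (by omega)]
      have := (Nat.log_lt_iff_lt_pow (by norm_num : 1 < 2) (by omega : r ≠ 0)).mpr hr
      omega
  have he : (Nat.digits 2 r).length + (e - (Nat.digits 2 r).length) = e := by omega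
  have := Nat.digits_append_zeroes_append_digits (b := 2) (k := e - (Nat.digits 2 r).length)
    (m := q) (n := r) (by norm_num) hq
  rw [he] at this
  unfold s2
  rw [← this]
  simp

lemma sum_g (a b : ℕ) (h : a ≤ b) :
    (∑ j ∈ Finset.Ico a b, g j) = (s2 b : ℤ) - (s2 a : ℤ) := by
  induction b with
  | zero => interval_cases a; simp
  | succ n ih =>
    rcases Nat.lt_or_ge a (n + 1) with h' | h'
    · have han : a ≤ n := by omega
      rw [Finset.sum_Ico_succ_top han, ih han, g]
      ring
    · have : a = n + 1 := by omega
      subst this; simp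

theorem stmt_13 (m L : ℕ) (hm : 1 ≤ m) (hmL : m ≤ 2 ^ L) :
    ∀ ℓ : ℕ, 1 ≤ ℓ → ℓ ≤ m →
      (ℓ < m → (∑ j ∈ Finset.Ico (2 * 2 ^ L - m + ℓ) (3 * 2 ^ L - m + ℓ), g j) = 0) ∧
      (ℓ = m → (∑ j ∈ Finset.Ico (2 * 2 ^ L - m + ℓ) (3 * 2 ^ L - m + ℓ), g j) = 1) := by
  intro ℓ h1 h2
  have hpos : 1 ≤ 2 ^ L := Nat.one_le_two_pow
  constructor
  · intro hlt
    set r := 2 ^ L - m + ℓ with hr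
    have hrlt : r < 2 ^ L := by omega
    have ha : 2 * 2 ^ L - m + ℓ = r + 2 ^ L * 1 := by omega
    have hb : 3 * 2 ^ L - m + ℓ = r + 2 ^ L * 2 := by omega
    rw [ha, hb, sum_g _ _ (by omega),
      s2_add_pow_mul L 1 r one_pos hrlt, s2_add_pow_mul L 2 r two_pos hrlt]
    have : s2 1 = s2 2 := by simp [s2]
    push_cast [this]; ring
  · intro heq
    subst heq
    have ha : 2 * 2 ^ L - ℓ + ℓ = 0 + 2 ^ L * 2 := by omega
    have hb : 3 * 2 ^ L - ℓ + ℓ = 0 + 2 ^ L * 3 := by omega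
    rw [ha, hb, sum_g _ _ (by omega),
      s2_add_pow_mul L 2 0 two_pos hpos, s2_add_pow_mul L 3 0 three_pos hpos]
    have h2 : s2 2 = 1 := by simp [s2]
    have h3 : s2 3 = 2 := by simp [s2]
    simp [h2, h3, s2]
end
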